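/- arXiv:2105.12716 — 8 statements merged into one kernel-verified Lean document; each statement's English description precedes it below -/
import Mathlib

section
/- Let n ≥ 3 and p be integers with 1 ≤ p and 2p ≤ n, and let r be a real number with 0 < r < 1 and r² ≥ p/n. Set λ = √(1−r²)/r and μ = −r/√(1−r²), and define S = p·λ² + (n−p)·μ² and H = |p·λ + (n−p)·μ|/n. Then S = a(n,p,H,1). -/
/-!
Writing `h = p κ₁ + (n - p) κ₂` for `n` times the signed mean curvature, the Gauss relation
`κ₁ κ₂ = -c` gives `(p κ₁ - (n - p) κ₂)² = h² + 4 p (n - p) c`, so the square root in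
`a(n, p, H, c)` is `p κ₁ - (n - p) κ₂` and `a` becomes a polynomial in `κ₁, κ₂` that simplifies
to `p κ₁² + (n - p) κ₂²`. The Clifford torus has `κ₁ κ₂ = -1`, and `r² ≥ p / n` is exactly the
condition `h ≤ 0`, which fixes the sign of `(n - 2p) h` needed to remove the absolute values.
-/

/-- The pinching bound `a(n,p,t,c)` from the paper. -/
noncomputable def pinchA (n p : ℕ) (t c : ℝ) : ℝ :=
  (n : ℝ) * c + (n : ℝ) ^ 3 * t ^ 2 / (2 * (p : ℝ) * ((n : ℝ) - (p : ℝ)))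
    - ((n : ℝ) * |(n : ℝ) - 2 * (p : ℝ)| * t / (2 * (p : ℝ) * ((n : ℝ) - (p : ℝ))))
      * Real.sqrt ((n : ℝ) ^ 2 * t ^ 2 + 4 * (p : ℝ) * ((n : ℝ) - (p : ℝ)) * c)

theorem sqrt_meanCurvature_sq_add_eq {n p : ℕ} (hn : 0 < n) {κ₁ κ₂ c : ℝ}
    (hgauss : κ₁ * κ₂ = -c) (hκ : ((n : ℝ) - p) * κ₂ ≤ p * κ₁) :
    Real.sqrt ((n : ℝ) ^ 2 * (|(p : ℝ) * κ₁ + ((n : ℝ) - p) * κ₂| / n) ^ 2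
        + 4 * (p : ℝ) * ((n : ℝ) - p) * c) = p * κ₁ - ((n : ℝ) - p) * κ₂ := by
  have hn0 : (n : ℝ) ≠ 0 := by positivity
  have hsq : (n : ℝ) ^ 2 * (|(p : ℝ) * κ₁ + ((n : ℝ) - p) * κ₂| / n) ^ 2
      + 4 * (p : ℝ) * ((n : ℝ) - p) * c = (p * κ₁ - ((n : ℝ) - p) * κ₂) ^ 2 := by
    rw [div_pow, sq_abs]
    field_simp
    linear_combination (4 * (p : ℝ) * ((n : ℝ) - p)) * hgauss
  rw [hsq, Real.sqrt_sq (by linarith)]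

theorem pinchA_eq_of_mul_eq_neg {n p : ℕ} (hp : 0 < p) (hpn : p < n) {κ₁ κ₂ c : ℝ}
    (hgauss : κ₁ * κ₂ = -c) (hκ : ((n : ℝ) - p) * κ₂ ≤ p * κ₁)
    (hsign : ((n : ℝ) - 2 * p) * (p * κ₁ + ((n : ℝ) - p) * κ₂) ≤ 0) :
    pinchA n p (|(p : ℝ) * κ₁ + ((n : ℝ) - p) * κ₂| / n) c
      = p * κ₁ ^ 2 + ((n : ℝ) - p) * κ₂ ^ 2 := by
  have hp0 : (0 : ℝ) < p := by exact_mod_cast hp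
  have hpn' : (p : ℝ) < n := by exact_mod_cast hpn
  have hn0 : (n : ℝ) ≠ 0 := by linarith
  have hnp : (n : ℝ) - p ≠ 0 := by linarith
  have hcoef : (n : ℝ) * |(n : ℝ) - 2 * p| * (|(p : ℝ) * κ₁ + ((n : ℝ) - p) * κ₂| / n)
      = -(((n : ℝ) - 2 * p) * (p * κ₁ + ((n : ℝ) - p) * κ₂)) := by
    rw [← abs_of_nonpos hsign, abs_mul]
    field_simp
  rw [pinchA, sqrt_meanCurvature_sq_add_eq (by omega) hgauss hκ, hcoef, div_pow, sq_abs]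
  field_simp
  linear_combination (2 * (n : ℝ) * p * ((n : ℝ) - p)) * hgauss

theorem clifford_torus_curvatures_mul {r : ℝ} (hr0 : 0 < r) (hr1 : r < 1) :
    Real.sqrt (1 - r ^ 2) / r * -(r / Real.sqrt (1 - r ^ 2)) = -1 := by
  have hq : Real.sqrt (1 - r ^ 2) ≠ 0 := (Real.sqrt_pos.mpr (by nlinarith)).ne'
  field_simp

theorem clifford_torus_meanCurvature_nonpos {n p r : ℝ} (hn : 0 < n) (hr0 : 0 < r) (hr1 : r < 1)
    (hr2 : p / n ≤ r ^ 2) :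
    p * (Real.sqrt (1 - r ^ 2) / r) + (n - p) * -(r / Real.sqrt (1 - r ^ 2)) ≤ 0 := by
  have hq : 0 < Real.sqrt (1 - r ^ 2) := Real.sqrt_pos.mpr (by nlinarith)
  have hq2 : Real.sqrt (1 - r ^ 2) ^ 2 = 1 - r ^ 2 := Real.sq_sqrt (by nlinarith)
  have hpr : p ≤ n * r ^ 2 := by rwa [div_le_iff₀' hn] at hr2
  have hform : p * (Real.sqrt (1 - r ^ 2) / r) + (n - p) * -(r / Real.sqrt (1 - r ^ 2))
      = (p - n * r ^ 2) / (r * Real.sqrt (1 - r ^ 2)) := by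
    field_simp
    linear_combination p * hq2
  rw [hform]
  exact div_nonpos_of_nonpos_of_nonneg (by linarith) (by positivity)

theorem clifford_torus_S_eq_a_general (n p : ℕ) (hp : 1 ≤ p) (hpn : 2 * p ≤ n)
    (r : ℝ) (hr0 : 0 < r) (hr1 : r < 1) (hr2 : (p : ℝ) / (n : ℝ) ≤ r ^ 2) :
    (p : ℝ) * (Real.sqrt (1 - r ^ 2) / r) ^ 2
      + ((n : ℝ) - (p : ℝ)) * (-(r / Real.sqrt (1 - r ^ 2))) ^ 2
    = pinchA n p
        (|(p : ℝ) * (Real.sqrt (1 - r ^ 2) / r)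
            + ((n : ℝ) - (p : ℝ)) * (-(r / Real.sqrt (1 - r ^ 2)))| / (n : ℝ)) 1 := by
  have hp1 : (1 : ℝ) ≤ p := by exact_mod_cast hp
  have h2p : 2 * (p : ℝ) ≤ n := by exact_mod_cast hpn
  have hκ₁ : 0 ≤ Real.sqrt (1 - r ^ 2) / r := by positivity
  have hκ₂ : -(r / Real.sqrt (1 - r ^ 2)) ≤ 0 := neg_nonpos.mpr (by positivity)
  refine (pinchA_eq_of_mul_eq_neg (by omega) (by omega)
    (clifford_torus_curvatures_mul hr0 hr1) ?_ ?_).symm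
  · exact (mul_nonpos_of_nonneg_of_nonpos (by linarith) hκ₂).trans (by positivity)
  · exact mul_nonpos_of_nonneg_of_nonpos (by linarith)
      (clifford_torus_meanCurvature_nonpos (by linarith) hr0 hr1 hr2)

theorem clifford_torus_S_eq_a (n p : ℕ) (hn : 3 ≤ n) (hp : 1 ≤ p) (hpn : 2 * p ≤ n)
    (r : ℝ) (hr0 : 0 < r) (hr1 : r < 1) (hr2 : (p : ℝ) / (n : ℝ) ≤ r ^ 2) :
    (p : ℝ) * (Real.sqrt (1 - r ^ 2) / r) ^ 2
      + ((n : ℝ) - (p : ℝ)) * (-(r / Real.sqrt (1 - r ^ 2))) ^ 2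
    = pinchA n p
        (|(p : ℝ) * (Real.sqrt (1 - r ^ 2) / r)
            + ((n : ℝ) - (p : ℝ)) * (-(r / Real.sqrt (1 - r ^ 2)))| / (n : ℝ)) 1 :=
  clifford_torus_S_eq_a_general n p hp hpn r hr0 hr1 hr2
end

section
/- Let n ≥ 3 and p be integers with 1 ≤ p and 2p < n, and let r be a real number with 0 < r < 1 and r² < p/n. Set λ = √(1−r²)/r and μ = −r/√(1−r²), and define S = p·λ² + (n−p)·μ² and H = |p·λ + (n−p)·μ|/n. Then S > a(n,p,H,1). -/
theorem sqrt_pinchA_radicand (n p : ℕ) (hn : 0 < n) (κ₁ κ₂ : ℝ) :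
    Real.sqrt ((n : ℝ) ^ 2 * (|(p : ℝ) * κ₁ + ((n : ℝ) - p) * κ₂| / n) ^ 2
        + 4 * (p : ℝ) * ((n : ℝ) - p) * -(κ₁ * κ₂))
      = |(p : ℝ) * κ₁ - ((n : ℝ) - p) * κ₂| := by
  have hn' : (n : ℝ) ≠ 0 := by positivity
  rw [div_pow, sq_abs, ← Real.sqrt_sq_eq_abs]
  congr 1
  field_simp
  ring

theorem pinchA_eq_sub (n p : ℕ) (hp : 0 < p) (hpn : p < n) (κ₁ κ₂ : ℝ) :
    pinchA n p (|(p : ℝ) * κ₁ + ((n : ℝ) - p) * κ₂| / n) (-(κ₁ * κ₂))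
      = (p : ℝ) * κ₁ ^ 2 + ((n : ℝ) - p) * κ₂ ^ 2
        - ((n - 2 * p) * (p * κ₁ - (n - p) * κ₂) * (p * κ₁ + (n - p) * κ₂)
          + |(n - 2 * p) * (p * κ₁ - (n - p) * κ₂) * (p * κ₁ + (n - p) * κ₂)|)
          / (2 * p * (n - p)) := by
  have hp' : (0 : ℝ) < p := by exact_mod_cast hp
  have hpn' : (0 : ℝ) < n - p := sub_pos.mpr (by exact_mod_cast hpn)
  have hn' : (0 : ℝ) < n := by linarith
  rw [pinchA, sqrt_pinchA_radicand n p (hp.trans hpn), abs_mul, abs_mul, div_pow, sq_abs]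
  field_simp
  ring

theorem pinchA_lt_of_pos (n p : ℕ) (hp : 0 < p) (hpn : p < n) (κ₁ κ₂ : ℝ)
    (hX : 0 < ((n : ℝ) - 2 * p) * (p * κ₁ - (n - p) * κ₂) * (p * κ₁ + (n - p) * κ₂)) :
    pinchA n p (|(p : ℝ) * κ₁ + ((n : ℝ) - p) * κ₂| / n) (-(κ₁ * κ₂))
      < (p : ℝ) * κ₁ ^ 2 + ((n : ℝ) - p) * κ₂ ^ 2 := by
  have hp' : (0 : ℝ) < p := by exact_mod_cast hp
  have hpn' : (0 : ℝ) < n - p := sub_pos.mpr (by exact_mod_cast hpn)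
  rw [pinchA_eq_sub n p hp hpn, sub_lt_self_iff, abs_of_pos hX]
  positivity

theorem clifford_torus_S_gt_a_general (n p : ℕ) (hp : 1 ≤ p) (hpn : 2 * p < n)
    (r : ℝ) (hr0 : 0 < r) (hr1 : r < 1) (hr2 : r ^ 2 < (p : ℝ) / (n : ℝ)) :
    (p : ℝ) * (Real.sqrt (1 - r ^ 2) / r) ^ 2
      + ((n : ℝ) - (p : ℝ)) * (-(r / Real.sqrt (1 - r ^ 2))) ^ 2
    > pinchA n p
        (|(p : ℝ) * (Real.sqrt (1 - r ^ 2) / r)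
            + ((n : ℝ) - (p : ℝ)) * (-(r / Real.sqrt (1 - r ^ 2)))| / (n : ℝ)) 1 := by
  have hpn' : (2 * p : ℝ) < n := by exact_mod_cast hpn
  have hp' : (1 : ℝ) ≤ p := by exact_mod_cast hp
  set w := Real.sqrt (1 - r ^ 2)
  have hw : 0 < w := Real.sqrt_pos.mpr (by nlinarith)
  have hw2 : w ^ 2 = 1 - r ^ 2 := Real.sq_sqrt (by nlinarith)
  have hκ : -(w / r * -(r / w)) = 1 := by field_simp
  have hsum : (p : ℝ) * (w / r) + (n - p) * -(r / w) = (p - n * r ^ 2) / (r * w) := by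
    field_simp
    linear_combination (p : ℝ) * hw2
  have hmean : 0 < (p : ℝ) * (w / r) + (n - p) * -(r / w) := by
    rw [hsum]
    have hnr : (n : ℝ) * r ^ 2 < p := (lt_div_iff₀' (by linarith)).mp hr2
    exact div_pos (by linarith) (by positivity)
  have hdiff : 0 < (p : ℝ) * (w / r) - (n - p) * -(r / w) := by
    have hq : (0 : ℝ) < n - p := by linarith
    rw [mul_neg, sub_neg_eq_add]
    positivity
  rw [← hκ]
  exact pinchA_lt_of_pos n p (by omega) (by omega) _ _
    (mul_pos (mul_pos (by linarith) hdiff) hmean)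

theorem clifford_torus_S_gt_a (n p : ℕ) (hn : 3 ≤ n) (hp : 1 ≤ p) (hpn : 2 * p < n)
    (r : ℝ) (hr0 : 0 < r) (hr1 : r < 1) (hr2 : r ^ 2 < (p : ℝ) / (n : ℝ)) :
    (p : ℝ) * (Real.sqrt (1 - r ^ 2) / r) ^ 2
      + ((n : ℝ) - (p : ℝ)) * (-(r / Real.sqrt (1 - r ^ 2))) ^ 2
    > pinchA n p
        (|(p : ℝ) * (Real.sqrt (1 - r ^ 2) / r)
            + ((n : ℝ) - (p : ℝ)) * (-(r / Real.sqrt (1 - r ^ 2)))| / (n : ℝ)) 1 :=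
  clifford_torus_S_gt_a_general n p hp hpn r hr0 hr1 hr2
end

section
/- Let n ≥ 3 and p be integers with 1 ≤ p and 2p ≤ n, and let k₁,…,kₙ be real numbers with tr k = Σᵢ kᵢ ≥ 0. Then for every subset a ⊆ {1,…,n} with |a| = p, one has K_a · K_{⋆a} ≥ (1/4)·(tr k)² − (1/4)·( ((n−2p)/n)·tr k + √(4p(n−p)/n)·‖k̊‖ )². -/
/-!
With `S = K_a` and `T = tr k` one has `4 S (T - S) = T² - (T - 2S)²`, and
`T - 2S = ((n - 2p)/n) T - 2E` where `E = Σ_{i ∈ a} (kᵢ - T/n)`. The deviations `kᵢ - T/n`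
sum to zero, so the sums of them over `a` and over its complement are opposite; Cauchy–Schwarz
on both parts gives `n E² ≤ p (n - p) ‖k̊‖²`. As `tr k ≥ 0` and `2p ≤ n`, this bounds
`|T - 2S|` by `((n - 2p)/n) T + √(4p(n-p)/n) ‖k̊‖`.
-/

open Finset

section

variable {ι : Type*} [Fintype ι]

lemma card_mul_sq_sum_le_of_sum_eq_zero [DecidableEq ι] {x : ι → ℝ} (hx : ∑ i, x i = 0)
    (s : Finset ι) :
    Fintype.card ι * (∑ i ∈ s, x i) ^ 2
      ≤ #s * (Fintype.card ι - #s) * ∑ i, x i ^ 2 := by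
  have hcompl : ∑ i ∈ sᶜ, x i = -∑ i ∈ s, x i := by
    linarith [sum_add_sum_compl s x]
  have hs := sq_sum_le_card_mul_sum_sq (s := s) (f := x)
  have hsc := sq_sum_le_card_mul_sum_sq (s := sᶜ) (f := x)
  rw [hcompl, neg_sq, card_compl, Nat.cast_sub (card_le_univ s)] at hsc
  rw [← sum_add_sum_compl s fun i ↦ x i ^ 2]
  nlinarith [(Nat.cast_le (α := ℝ)).mpr (card_le_univ s)]

lemma sum_sub_mean_eq_zero [Nonempty ι] (k : ι → ℝ) :
    ∑ i, (k i - (∑ j, k j) / Fintype.card ι) = 0 := by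
  rw [sum_sub_distrib, sum_const, card_univ, nsmul_eq_mul,
    mul_div_cancel₀ _ (Nat.cast_ne_zero.mpr Fintype.card_ne_zero), sub_self]

lemma abs_two_mul_sum_sub_mean_le [Nonempty ι] (k : ι → ℝ) (s : Finset ι) :
    |2 * ∑ i ∈ s, (k i - (∑ j, k j) / Fintype.card ι)|
      ≤ √(4 * #s * (Fintype.card ι - #s) / Fintype.card ι)
        * √(∑ i, (k i - (∑ j, k j) / Fintype.card ι) ^ 2) := by
  have hn : (0 : ℝ) < Fintype.card ι := Nat.cast_pos.mpr Fintype.card_pos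
  have hsn : (#s : ℝ) ≤ Fintype.card ι := Nat.cast_le.mpr (card_le_univ s)
  rw [← Real.sqrt_mul (by positivity)]
  apply Real.abs_le_sqrt
  classical
  have := card_mul_sq_sum_le_of_sum_eq_zero (sum_sub_mean_eq_zero k) s
  rw [mul_pow, div_mul_eq_mul_div, le_div_iff₀ hn]
  nlinarith

lemma sum_sub_two_mul_sum_eq [Nonempty ι] (k : ι → ℝ) (s : Finset ι) :
    ∑ i, k i - 2 * ∑ i ∈ s, k i
      = (Fintype.card ι - 2 * #s) / Fintype.card ι * ∑ i, k i
        - 2 * ∑ i ∈ s, (k i - (∑ j, k j) / Fintype.card ι) := by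
  have hn : (Fintype.card ι : ℝ) ≠ 0 := Nat.cast_ne_zero.mpr Fintype.card_ne_zero
  rw [sum_sub_distrib, sum_const, nsmul_eq_mul]
  field_simp
  ring

end

theorem eigenvalue_lower_bound_general (n p : ℕ) (hn : 3 ≤ n) (hpn : 2 * p ≤ n)
    (k : Fin n → ℝ) (htr : 0 ≤ ∑ i, k i)
    (a : Finset (Fin n)) (ha : a.card = p) :
    (∑ i ∈ a, k i) * (∑ i ∈ aᶜ, k i)
      ≥ (1 / 4) * (∑ i, k i) ^ 2
        - (1 / 4) * (((n : ℝ) - 2 * (p : ℝ)) / (n : ℝ) * (∑ i, k i)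
            + Real.sqrt (4 * (p : ℝ) * ((n : ℝ) - (p : ℝ)) / (n : ℝ))
              * Real.sqrt (∑ i, (k i - (∑ j, k j) / (n : ℝ)) ^ 2)) ^ 2 := by
  have : Nonempty (Fin n) := ⟨⟨0, by omega⟩⟩
  have hdev := abs_two_mul_sum_sub_mean_le k a
  have hsplit := sum_sub_two_mul_sum_eq k a
  simp only [Fintype.card_fin, ha] at hdev hsplit
  set T := ∑ i, k i
  set A := ((n : ℝ) - 2 * p) / n * T
  set c := √(4 * (p : ℝ) * (n - p) / n) * √(∑ i, (k i - T / n) ^ 2)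
  have hA : 0 ≤ A := by
    have : (2 * p : ℝ) ≤ n := by exact_mod_cast hpn
    exact mul_nonneg (div_nonneg (sub_nonneg.mpr this) n.cast_nonneg) htr
  have hbound : |T - 2 * ∑ i ∈ a, k i| ≤ A + c := by
    rw [hsplit]
    exact (abs_sub _ _).trans (by rw [abs_of_nonneg hA]; linarith)
  have hsq : (T - 2 * ∑ i ∈ a, k i) ^ 2 ≤ (A + c) ^ 2 :=
    sq_le_sq' (abs_le.mp hbound).1 (abs_le.mp hbound).2
  have hcompl : ∑ i ∈ aᶜ, k i = T - ∑ i ∈ a, k i := by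
    linarith [sum_add_sum_compl a k]
  have hsquare : 4 * ((∑ i ∈ a, k i) * (T - ∑ i ∈ a, k i))
      = T ^ 2 - (T - 2 * ∑ i ∈ a, k i) ^ 2 := by ring
  rw [hcompl]
  linarith

theorem eigenvalue_lower_bound (n p : ℕ) (hn : 3 ≤ n) (hp : 1 ≤ p) (hpn : 2 * p ≤ n)
    (k : Fin n → ℝ) (htr : 0 ≤ ∑ i, k i)
    (a : Finset (Fin n)) (ha : a.card = p) :
    (∑ i ∈ a, k i) * (∑ i ∈ aᶜ, k i)
      ≥ (1 / 4) * (∑ i, k i) ^ 2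
        - (1 / 4) * (((n : ℝ) - 2 * (p : ℝ)) / (n : ℝ) * (∑ i, k i)
            + Real.sqrt (4 * (p : ℝ) * ((n : ℝ) - (p : ℝ)) / (n : ℝ))
              * Real.sqrt (∑ i, (k i - (∑ j, k j) / (n : ℝ)) ^ 2)) ^ 2 :=
  eigenvalue_lower_bound_general n p hn hpn k htr a ha
end

section
/- Let n ≥ 3 and p be integers with 1 ≤ p and 2p ≤ n, and let k₁,…,kₙ be real numbers with tr k = Σᵢ kᵢ ≥ 0. Suppose that the minimum of K_b · K_{⋆b} over all subsets b ⊆ {1,…,n} with |b| = p equals (1/4)·(tr k)² − (1/4)·( ((n−2p)/n)·tr k + √(4p(n−p)/n)·‖k̊‖ )². Then there exist a subset a ⊆ {1,…,n} with |a| = p and real numbers λ, μ such that kᵢ = λ for every i ∈ a and kᵢ = μ for every i ∉ a. -/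
/-!
Let `b` be a `p`-subset attaining the minimum, `T = tr k`, `S = K_b` and `x = S - p T / n`.
Splitting `‖k̊‖²` into the squared deviations within `b` and within its complement plus the
between-group term `n x² / (p (n - p))` gives `x² ≤ e² := p (n - p) / n · ‖k̊‖²`, with equality
exactly when `k` is constant on `b` and on its complement. On the other hand
`K_b K_{⋆b} = T² / 4 - (2 S - T)² / 4` and `2 S - T = 2 x - d` with `d = (n - 2p) / n · T ≥ 0`,
so the hypothesis reads `|2 x - d| = d + 2 e`; together with `|x| ≤ e` this forces `|x| = e`.
-/

open Finset

namespace Finset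

variable {ι : Type*}

theorem sum_sq_sub_eq_sum_sq_sub_mean_add (s : Finset ι) (f : ι → ℝ) (c : ℝ) :
    ∑ i ∈ s, (f i - c) ^ 2
      = ∑ i ∈ s, (f i - (∑ j ∈ s, f j) / #s) ^ 2 + #s * ((∑ j ∈ s, f j) / #s - c) ^ 2 := by
  rcases s.eq_empty_or_nonempty with rfl | hs
  · simp
  set m := (∑ j ∈ s, f j) / #s
  have hdev : ∑ i ∈ s, (f i - m) = 0 := by
    rw [sum_sub_distrib, sum_const, nsmul_eq_mul,
      mul_div_cancel₀ _ (Nat.cast_ne_zero.mpr hs.card_pos.ne'), sub_self]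
  calc ∑ i ∈ s, (f i - c) ^ 2
      = ∑ i ∈ s, ((f i - m) ^ 2 + 2 * (m - c) * (f i - m) + (m - c) ^ 2) :=
        sum_congr rfl fun i _ => by ring
    _ = _ := by
        rw [sum_add_distrib, sum_add_distrib, ← mul_sum, hdev, sum_const, nsmul_eq_mul]
        ring

theorem eq_of_sum_sq_sub_eq_zero {s : Finset ι} {f : ι → ℝ} {c : ℝ}
    (h : ∑ i ∈ s, (f i - c) ^ 2 = 0) {i : ι} (hi : i ∈ s) : f i = c := by
  rw [sum_eq_zero_iff_of_nonneg fun j _ => sq_nonneg (f j - c)] at h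
  exact sub_eq_zero.mp (pow_eq_zero_iff two_ne_zero |>.mp (h i hi))

variable [Fintype ι] [DecidableEq ι]

theorem mul_sum_sq_sub_mean_eq_within_add_between (s : Finset ι) (hs : s.Nonempty)
    (hsc : sᶜ.Nonempty) (k : ι → ℝ) :
    (#s * (Fintype.card ι - #s) / Fintype.card ι)
        * ∑ i, (k i - (∑ j, k j) / Fintype.card ι) ^ 2
      = (#s * (Fintype.card ι - #s) / Fintype.card ι)
          * (∑ i ∈ s, (k i - (∑ j ∈ s, k j) / #s) ^ 2
            + ∑ i ∈ sᶜ, (k i - (∑ j ∈ sᶜ, k j) / #sᶜ) ^ 2)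
        + (∑ i ∈ s, k i - #s * (∑ j, k j) / Fintype.card ι) ^ 2 := by
  have hcard : (#sᶜ : ℝ) = Fintype.card ι - #s := by
    rw [card_compl, Nat.cast_sub (card_le_univ s)]
  have hp : (#s : ℝ) ≠ 0 := Nat.cast_ne_zero.mpr hs.card_pos.ne'
  have hq : (Fintype.card ι : ℝ) - #s ≠ 0 := hcard ▸ Nat.cast_ne_zero.mpr hsc.card_pos.ne'
  have hN : (Fintype.card ι : ℝ) ≠ 0 :=
    Nat.cast_ne_zero.mpr (hs.card_pos.trans_le (card_le_univ s)).ne'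
  rw [← sum_add_sum_compl s (fun i => (k i - _) ^ 2), sum_sq_sub_eq_sum_sq_sub_mean_add,
    sum_sq_sub_eq_sum_sq_sub_mean_add sᶜ, ← sum_add_sum_compl s k, hcard]
  field_simp
  ring

theorem card_mul_sub_card_div_pos (s : Finset ι) (hs : s.Nonempty) (hsc : sᶜ.Nonempty) :
    0 < (#s * (Fintype.card ι - #s) / Fintype.card ι : ℝ) := by
  have hq : (#s : ℝ) < Fintype.card ι := by
    exact_mod_cast (card_lt_univ_of_notMem (hsc.choose_spec |> mem_compl.mp))
  have hp : (0 : ℝ) < #s := by exact_mod_cast hs.card_pos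
  have : (0 : ℝ) < (Fintype.card ι - #s) := sub_pos.mpr hq
  have : (0 : ℝ) < Fintype.card ι := hp.trans hq
  positivity

theorem sq_sum_sub_le_mul_sum_sq_sub_mean (s : Finset ι) (hs : s.Nonempty) (hsc : sᶜ.Nonempty)
    (k : ι → ℝ) :
    (∑ i ∈ s, k i - #s * (∑ j, k j) / Fintype.card ι) ^ 2
      ≤ (#s * (Fintype.card ι - #s) / Fintype.card ι)
          * ∑ i, (k i - (∑ j, k j) / Fintype.card ι) ^ 2 := by
  rw [mul_sum_sq_sub_mean_eq_within_add_between s hs hsc]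
  exact le_add_of_nonneg_left <| mul_nonneg (card_mul_sub_card_div_pos s hs hsc).le <|
    add_nonneg (sum_nonneg fun i _ => sq_nonneg _) (sum_nonneg fun i _ => sq_nonneg _)

theorem exists_eq_on_and_compl_of_sq_sum_sub_eq (s : Finset ι) (hs : s.Nonempty)
    (hsc : sᶜ.Nonempty) (k : ι → ℝ)
    (h : (∑ i ∈ s, k i - #s * (∑ j, k j) / Fintype.card ι) ^ 2
      = (#s * (Fintype.card ι - #s) / Fintype.card ι)
          * ∑ i, (k i - (∑ j, k j) / Fintype.card ι) ^ 2) :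
    ∃ lam mu : ℝ, (∀ i ∈ s, k i = lam) ∧ ∀ i ∉ s, k i = mu := by
  rw [mul_sum_sq_sub_mean_eq_within_add_between s hs hsc, right_eq_add, mul_eq_zero,
    or_iff_right (card_mul_sub_card_div_pos s hs hsc).ne',
    add_eq_zero_iff_of_nonneg (sum_nonneg fun i _ => sq_nonneg _)
      (sum_nonneg fun i _ => sq_nonneg _)] at h
  exact ⟨_, _, fun i hi => eq_of_sum_sq_sub_eq_zero h.1 hi,
    fun i hi => eq_of_sum_sq_sub_eq_zero h.2 (mem_compl.mpr hi)⟩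

end Finset

theorem sq_eq_sq_of_sq_two_mul_sub_eq {x d e : ℝ} (hd : 0 ≤ d) (he : 0 ≤ e) (hx : x ^ 2 ≤ e ^ 2)
    (h : (2 * x - d) ^ 2 = (d + 2 * e) ^ 2) : x ^ 2 = e ^ 2 := by
  have hroots : (x - (d + e)) * (x + e) = 0 := by linear_combination h / 4
  rcases mul_eq_zero.mp hroots with hx' | hx'
  · nlinarith
  · rw [show x = -e by linarith, neg_sq]

theorem equality_case_two_eigenvalues (n p : ℕ) (hp : 1 ≤ p) (hpn : 2 * p ≤ n)
    (k : Fin n → ℝ) (htr : 0 ≤ ∑ i, k i)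
    (heq : (Finset.univ.powersetCard p).inf'
        (Finset.powersetCard_nonempty.mpr
          (by simp only [Finset.card_univ, Fintype.card_fin]; omega))
        (fun b => (∑ i ∈ b, k i) * (∑ i ∈ bᶜ, k i))
      = (1 / 4) * (∑ i, k i) ^ 2
        - (1 / 4) * (((n : ℝ) - 2 * (p : ℝ)) / (n : ℝ) * (∑ i, k i)
            + Real.sqrt (4 * (p : ℝ) * ((n : ℝ) - (p : ℝ)) / (n : ℝ))
              * Real.sqrt (∑ i, (k i - (∑ j, k j) / (n : ℝ)) ^ 2)) ^ 2) :
    ∃ a : Finset (Fin n), a.card = p ∧ ∃ lam mu : ℝ,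
      (∀ i ∈ a, k i = lam) ∧ (∀ i ∉ a, k i = mu) := by
  obtain ⟨b, hb, hmin⟩ := exists_mem_eq_inf' (s := univ.powersetCard p)
    (powersetCard_nonempty.mpr (by rw [card_univ, Fintype.card_fin]; omega))
    (fun b => (∑ i ∈ b, k i) * (∑ i ∈ bᶜ, k i))
  have hbcard : #b = p := (mem_powersetCard.mp hb).2
  have hb_ne : b.Nonempty := card_pos.mp (by omega)
  have hbc_ne : bᶜ.Nonempty := card_pos.mp (by rw [card_compl, Fintype.card_fin]; omega)
  have hle := sq_sum_sub_le_mul_sum_sq_sub_mean b hb_ne hbc_ne k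
  refine ⟨b, hbcard, exists_eq_on_and_compl_of_sq_sum_sub_eq b hb_ne hbc_ne k ?_⟩
  simp only [hbcard, Fintype.card_fin] at hle ⊢
  set T := ∑ i, k i
  set S := ∑ i ∈ b, k i
  set E := (p * (n - p) / n : ℝ) * ∑ i, (k i - T / n) ^ 2
  have hE : 0 ≤ E := (sq_nonneg _).trans hle
  have hsqrt : √(4 * p * (n - p) / n : ℝ) * √(∑ i, (k i - T / n) ^ 2) = 2 * √E := by
    rw [← Real.sqrt_mul' _ (by positivity), show (4 * p * (n - p) / n : ℝ) * _ = 2 ^ 2 * E by ring,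
      Real.sqrt_mul (by norm_num), Real.sqrt_sq (by norm_num)]
  have hcompl : ∑ i ∈ bᶜ, k i = T - S := eq_sub_of_add_eq' (sum_add_sum_compl b k)
  rw [← Real.sq_sqrt hE]
  refine sq_eq_sq_of_sq_two_mul_sub_eq (d := (n - 2 * p) / n * T) ?_ (Real.sqrt_nonneg E) ?_ ?_
  · have h2p : (2 * p : ℝ) ≤ n := by exact_mod_cast hpn
    exact mul_nonneg (div_nonneg (by linarith) n.cast_nonneg) htr
  · rwa [Real.sq_sqrt hE]
  · rw [hmin, hcompl, hsqrt] at heq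
    have hn : (n : ℝ) ≠ 0 := by norm_cast; omega
    rw [show 2 * (S - p * T / n) - (n - 2 * p) / n * T = 2 * S - T by field_simp; ring]
    linear_combination (-4) * heq
end

section
/- Let n ≥ 3 and p be integers with 1 ≤ p and 2p < n. Let λ ≥ 0 be a real number, let a ⊆ {1,…,n} be a subset with |a| = p, and let k₁,…,kₙ be given by kᵢ = λ for i ∈ a and kᵢ = 0 for i ∉ a. If the minimum of K_b · K_{⋆b} over all subsets b ⊆ {1,…,n} with |b| = p equals (1/4)·(tr k)² − (1/4)·( ((n−2p)/n)·tr k + √(4p(n−p)/n)·‖k̊‖ )², then λ = 0, i.e. all kᵢ vanish. -/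
/-! For `k = λ·𝟙_a` with `|a| = p` one has `tr k = pλ` and `‖k̊‖² = λ² p(n-p)/n`, so the right-hand
side of the equality is `(1/4)(pλ)² - (1/4)(pλ + 2pλ(n-2p)/n)²`. The left-hand side is a minimum of
products of nonnegative numbers, hence nonnegative, which forces `2pλ(n-2p)/n = 0`; as `2p < n`,
this means `λ = 0`. -/

open Finset

section IteMem

variable {ι : Type*} [Fintype ι] [DecidableEq ι]

theorem sum_ite_mem_const (a : Finset ι) (c : ℝ) :
    ∑ i, (if i ∈ a then c else 0) = #a * c := by
  rw [sum_ite_mem, univ_inter, sum_const, nsmul_eq_mul]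

theorem sum_sq_sub_mean_ite_mem (a : Finset ι) (c : ℝ) (hι : Fintype.card ι ≠ 0) :
    ∑ i, ((if i ∈ a then c else 0) - (∑ j, if j ∈ a then c else 0) / Fintype.card ι) ^ 2
      = c ^ 2 * (#a * (Fintype.card ι - #a) / Fintype.card ι) := by
  rw [sum_ite_mem_const, ← sum_add_sum_compl a]
  have h_in : ∀ i ∈ a, ((if i ∈ a then c else 0) - #a * c / Fintype.card ι) ^ 2
      = (c - #a * c / Fintype.card ι) ^ 2 := fun i hi => by rw [if_pos hi]
  have h_out : ∀ i ∈ aᶜ, ((if i ∈ a then c else 0) - #a * c / Fintype.card ι) ^ 2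
      = (#a * c / Fintype.card ι) ^ 2 := fun i hi => by rw [if_neg (mem_compl.mp hi)]; ring
  rw [sum_congr rfl h_in, sum_congr rfl h_out, sum_const, sum_const, card_compl,
    nsmul_eq_mul, nsmul_eq_mul, Nat.cast_sub (card_le_univ a)]
  field_simp
  ring

end IteMem

theorem sqrt_four_mul_mul_sqrt_sq_mul {x c : ℝ} (hx : 0 ≤ x) (hc : 0 ≤ c) :
    √(4 * x) * √(c ^ 2 * x) = 2 * c * x := by
  rw [← Real.sqrt_mul (by positivity), show 4 * x * (c ^ 2 * x) = (2 * c * x) ^ 2 by ring,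
    Real.sqrt_sq (by positivity)]

theorem eq_zero_of_sq_le_sq_trace {n p c : ℝ} (hp : 0 < p) (hpn : 2 * p < n) (hc : 0 ≤ c)
    (h : ((n - 2 * p) / n * (p * c) + 2 * c * (p * (n - p) / n)) ^ 2 ≤ (p * c) ^ 2) :
    c = 0 := by
  have hn : n ≠ 0 := by linarith
  have hcoef : 0 < 2 * p * (n - 2 * p) / n := by
    apply div_pos _ (by linarith); nlinarith
  have hsplit : (n - 2 * p) / n * (p * c) + 2 * c * (p * (n - p) / n)
      = p * c + c * (2 * p * (n - 2 * p) / n) := by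
    field_simp; ring
  have hpc : 0 ≤ p * c := mul_nonneg hp.le hc
  have hy : 0 ≤ c * (2 * p * (n - 2 * p) / n) := mul_nonneg hc hcoef.le
  have : c * (2 * p * (n - 2 * p) / n) = 0 := by rw [hsplit] at h; nlinarith
  exact (mul_eq_zero.mp this).resolve_right hcoef.ne'

theorem equality_case_zero_eigenvalue (n p : ℕ) (hp : 1 ≤ p) (hpn : 2 * p < n)
    (lam : ℝ) (hlam : 0 ≤ lam)
    (a : Finset (Fin n)) (ha : a.card = p)
    (k : Fin n → ℝ) (hk : ∀ i, k i = if i ∈ a then lam else 0)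
    (heq : (Finset.univ.powersetCard p).inf'
        (Finset.powersetCard_nonempty.mpr
          (by simp only [Finset.card_univ, Fintype.card_fin]; omega))
        (fun b => (∑ i ∈ b, k i) * (∑ i ∈ bᶜ, k i))
      = (1 / 4) * (∑ i, k i) ^ 2
        - (1 / 4) * (((n : ℝ) - 2 * (p : ℝ)) / (n : ℝ) * (∑ i, k i)
            + Real.sqrt (4 * (p : ℝ) * ((n : ℝ) - (p : ℝ)) / (n : ℝ))
              * Real.sqrt (∑ i, (k i - (∑ j, k j) / (n : ℝ)) ^ 2)) ^ 2) :
    lam = 0 := by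
  have hk_nonneg : ∀ i, 0 ≤ k i := fun i => by rw [hk i]; split_ifs; exacts [hlam, le_rfl]
  have hmin := heq ▸ le_inf' _ _ fun b _ =>
    mul_nonneg (sum_nonneg fun i _ => hk_nonneg i) (sum_nonneg fun i _ => hk_nonneg i)
  simp only [hk] at hmin
  have htr := sum_ite_mem_const a lam
  have hdev := sum_sq_sub_mean_ite_mem a lam (by simp only [Fintype.card_fin]; omega)
  simp only [Fintype.card_fin, ha] at htr hdev
  have hp' : (0 : ℝ) < p := by exact_mod_cast hp
  have hpn' : 2 * (p : ℝ) < n := by exact_mod_cast hpn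
  have hvar : 0 ≤ (p : ℝ) * (n - p) / n := by
    apply div_nonneg _ (by linarith); nlinarith
  rw [hdev, htr, mul_assoc, mul_div_assoc, sqrt_four_mul_mul_sqrt_sq_mul hvar hlam] at hmin
  exact eq_zero_of_sq_le_sq_trace hp' hpn' hlam (by linarith)
end

section
/- Let n ≥ 3, p, m be integers with 1 ≤ p, 2p ≤ n and m ≥ 1. Let k(j,i), for 1 ≤ j ≤ m and 1 ≤ i ≤ n, be real numbers such that Σᵢ k(1,i) ≥ 0 and Σᵢ k(j,i) = 0 for every j ≥ 2. Set h = (1/n)·Σᵢ k(1,i) and φ = ( Σ_{j=1}^m Σ_{i=1}^n k(j,i)² − n·h² )^{1/2}. Then Σ_{j=1}^m ( min over subsets a ⊆ {1,…,n} with |a| = p of K_a(k_j)·K_{⋆a}(k_j) ) ≥ (p(n−p)/n)·( n·h² − (n(n−2p)/√(np(n−p)))·h·φ − φ² ), where k_j denotes the n-tuple (k(j,1),…,k(j,n)). -/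
/-! For a row `x` with sum `S = n μ` and a `p`-subset `a`, write `K_a = p μ + D`; then
`K_a K_{⋆a} = p (n - p) μ² + (n - 2p) μ D - D²`. Cauchy–Schwarz on `a` and on `aᶜ` separately
gives `D² ≤ (p (n - p) / n) (∑ x² - n μ²)`, so with `μ ≥ 0` and `n ≥ 2p` each row is bounded
below. For the trace-free rows `μ = 0` and the bound is `-(p (n - p) / n) ∑ x²`; summing the rows
turns the variances into `φ²`, and `√(p (n - p) / n) = p (n - p) / √(n p (n - p))` matches the
constant. -/

open Finset

theorem sq_card_mul_sum_sub_card_mul_sum_le {ι : Type*} [Fintype ι] [DecidableEq ι]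
    (x : ι → ℝ) (a : Finset ι) :
    ((Fintype.card ι : ℝ) * ∑ i ∈ a, x i - #a * ∑ i, x i) ^ 2
      ≤ #a * (Fintype.card ι - #a) * (Fintype.card ι * ∑ i, x i ^ 2 - (∑ i, x i) ^ 2) := by
  have hcard : (#aᶜ : ℝ) = Fintype.card ι - #a := by
    rw [card_compl, Nat.cast_sub (card_le_univ a)]
  have hin := sq_sum_le_card_mul_sum_sq (s := a) (f := x)
  have hout := sq_sum_le_card_mul_sum_sq (s := aᶜ) (f := x)
  rw [hcard] at hout
  rw [← sum_add_sum_compl a x, ← sum_add_sum_compl a (x · ^ 2)]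
  have hp : (0 : ℝ) ≤ #a := by positivity
  have hq : (0 : ℝ) ≤ Fintype.card ι - #a := by rw [← hcard]; positivity
  nlinarith [mul_le_mul_of_nonneg_left hin (mul_nonneg hq (add_nonneg hp hq)),
    mul_le_mul_of_nonneg_left hout (mul_nonneg hp (add_nonneg hp hq))]

theorem le_mul_of_sq_sub_mul_le {n p μ A B W : ℝ} (hpn : 2 * p ≤ n) (hμ : 0 ≤ μ)
    (hAB : A + B = n * μ) (hW : (A - p * μ) ^ 2 ≤ W) :
    p * (n - p) * μ ^ 2 - (n - 2 * p) * μ * √W - W ≤ A * B := by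
  have hD : -√W ≤ A - p * μ := (abs_le.1 (Real.abs_le_sqrt hW)).1
  have hB : B = n * μ - A := by linarith
  subst hB
  nlinarith [mul_le_mul_of_nonneg_left hD (mul_nonneg (sub_nonneg.2 hpn) hμ)]

theorem div_sqrt_mul_eq_sqrt_div {x : ℝ} (hx : 0 ≤ x) (n : ℝ) : x / √(n * x) = √(x / n) := by
  rw [Real.sqrt_mul' _ hx, Real.sqrt_div hx, mul_comm, ← div_div, Real.div_sqrt]

theorem le_sum_mul_sum_compl {ι : Type*} [Fintype ι] [DecidableEq ι] {n p : ℕ}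
    (hι : Fintype.card ι = n) (hpn : 2 * p ≤ n) (x : ι → ℝ) (hx : 0 ≤ ∑ i, x i)
    {a : Finset ι} (ha : #a = p) :
    p * (n - p) * ((∑ i, x i) / n) ^ 2
      - (n - 2 * p) * ((∑ i, x i) / n)
        * √(p * (n - p) / n * (∑ i, x i ^ 2 - n * ((∑ i, x i) / n) ^ 2))
      - p * (n - p) / n * (∑ i, x i ^ 2 - n * ((∑ i, x i) / n) ^ 2)
    ≤ (∑ i ∈ a, x i) * ∑ i ∈ aᶜ, x i := by
  obtain rfl | hn := n.eq_zero_or_pos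
  · have : IsEmpty ι := Fintype.card_eq_zero_iff.1 hι
    simp [Subsingleton.elim a ∅]
  have hn' : (0 : ℝ) < n := by exact_mod_cast hn
  have hcs := sq_card_mul_sum_sub_card_mul_sum_le x a
  rw [hι, ha] at hcs
  refine le_mul_of_sq_sub_mul_le (by exact_mod_cast hpn) (div_nonneg hx hn'.le)
    (by rw [sum_add_sum_compl, mul_div_cancel₀ _ hn'.ne']) ?_
  rw [← mul_le_mul_iff_of_pos_left (pow_pos hn' 2)]
  calc _ = ((n : ℝ) * ∑ i ∈ a, x i - p * ∑ i, x i) ^ 2 := by field_simp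
    _ ≤ _ := hcs
    _ = _ := by field_simp

theorem card_mul_sq_sum_div_le_sum_sq {ι : Type*} [Fintype ι] {n : ℕ}
    (hι : Fintype.card ι = n) (x : ι → ℝ) : n * ((∑ i, x i) / n) ^ 2 ≤ ∑ i, x i ^ 2 := by
  obtain rfl | hn := n.eq_zero_or_pos
  · simpa using sum_nonneg fun i (_ : i ∈ univ) => sq_nonneg (x i)
  have hn' : (0 : ℝ) < n := by exact_mod_cast hn
  have hcs := sq_sum_le_card_mul_sum_sq (s := univ) (f := x)
  rw [card_univ, hι] at hcs
  rw [div_pow, sq (n : ℝ), ← div_div, mul_div_cancel₀ _ hn'.ne', div_le_iff₀ hn']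
  linarith

theorem le_sum_inf'_mul_sum_compl {κ ι : Type*} [Fintype κ] [DecidableEq κ] [Fintype ι]
    [DecidableEq ι] {n p : ℕ} (hι : Fintype.card ι = n) (hpn : 2 * p ≤ n)
    (hne : (univ.powersetCard p : Finset (Finset ι)).Nonempty) (k : κ → ι → ℝ) (j₀ : κ)
    (h0 : 0 ≤ ∑ i, k j₀ i) (hj : ∀ j ≠ j₀, ∑ i, k j i = 0) :
    p * (n - p) * ((∑ i, k j₀ i) / n) ^ 2
      - (n - 2 * p) * ((∑ i, k j₀ i) / n)
        * √(p * (n - p) / n * (∑ j, ∑ i, k j i ^ 2 - n * ((∑ i, k j₀ i) / n) ^ 2))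
      - p * (n - p) / n * (∑ j, ∑ i, k j i ^ 2 - n * ((∑ i, k j₀ i) / n) ^ 2)
    ≤ ∑ j, (univ.powersetCard p).inf' hne (fun a => (∑ i ∈ a, k j i) * ∑ i ∈ aᶜ, k j i) := by
  have hrow (j : κ) (hsum : 0 ≤ ∑ i, k j i) := le_inf' hne _ fun a ha =>
    le_sum_mul_sum_compl hι hpn (k j) hsum (mem_powersetCard.1 ha).2
  have hrest : -(p * (n - p) / n * ∑ j ∈ univ.erase j₀, ∑ i, k j i ^ 2)
      ≤ ∑ j ∈ univ.erase j₀,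
          (univ.powersetCard p).inf' hne (fun a => (∑ i ∈ a, k j i) * ∑ i ∈ aᶜ, k j i) := by
    rw [mul_sum, ← sum_neg_distrib]
    refine sum_le_sum fun j hj₀ => ?_
    have hzero := hj j (ne_of_mem_erase hj₀)
    simpa [hzero] using hrow j hzero.ge
  rw [← add_sum_erase _ _ (mem_univ j₀), ← add_sum_erase _ _ (mem_univ j₀)]
  refine le_trans ?_ (add_le_add (hrow j₀ h0) hrest)
  have hpn' : (2 * p : ℝ) ≤ n := by exact_mod_cast hpn
  have hc : (0 : ℝ) ≤ p * (n - p) / n := by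
    have : (0 : ℝ) ≤ n - p := by linarith
    positivity
  have hR : 0 ≤ ∑ j ∈ univ.erase j₀, ∑ i, k j i ^ 2 := by positivity
  have hmono := Real.sqrt_le_sqrt <| mul_le_mul_of_nonneg_left
    (sub_le_sub_right (le_add_of_nonneg_right (a := ∑ i, k j₀ i ^ 2) hR)
      (n * ((∑ i, k j₀ i) / n) ^ 2)) hc
  have hcoef : (0 : ℝ) ≤ (n - 2 * p) * ((∑ i, k j₀ i) / n) := by
    have : (0 : ℝ) ≤ n - 2 * p := by linarith
    positivity
  linarith [mul_le_mul_of_nonneg_left hmono hcoef]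

theorem bochner_operator_lower_bound (n p m : ℕ) (hn : 3 ≤ n)
    (hpn : 2 * p ≤ n) (hm : 1 ≤ m)
    (k : Fin m → Fin n → ℝ)
    (h0 : 0 ≤ ∑ i, k ⟨0, hm⟩ i)
    (hj : ∀ j : Fin m, (j : ℕ) ≠ 0 → ∑ i, k j i = 0) :
    ∑ j, (Finset.univ.powersetCard p).inf'
        (Finset.powersetCard_nonempty.mpr
          (by simp only [Finset.card_univ, Fintype.card_fin]; omega))
        (fun a => (∑ i ∈ a, k j i) * (∑ i ∈ aᶜ, k j i))
    ≥ ((p : ℝ) * ((n : ℝ) - (p : ℝ)) / (n : ℝ)) *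
        ((n : ℝ) * ((∑ i, k ⟨0, hm⟩ i) / (n : ℝ)) ^ 2
          - ((n : ℝ) * ((n : ℝ) - 2 * (p : ℝ))
              / Real.sqrt ((n : ℝ) * (p : ℝ) * ((n : ℝ) - (p : ℝ))))
            * ((∑ i, k ⟨0, hm⟩ i) / (n : ℝ))
            * Real.sqrt ((∑ j, ∑ i, (k j i) ^ 2)
                - (n : ℝ) * ((∑ i, k ⟨0, hm⟩ i) / (n : ℝ)) ^ 2)
          - (Real.sqrt ((∑ j, ∑ i, (k j i) ^ 2)
                - (n : ℝ) * ((∑ i, k ⟨0, hm⟩ i) / (n : ℝ)) ^ 2)) ^ 2) := by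
  have key := le_sum_inf'_mul_sum_compl (Fintype.card_fin n) hpn
    (powersetCard_nonempty.2 (by simp only [card_univ, Fintype.card_fin]; omega)) k ⟨0, hm⟩ h0
    fun j hj₀ => hj j fun h => hj₀ (Fin.ext h)
  set H : ℝ := (∑ i, k ⟨0, hm⟩ i) / n
  set X : ℝ := ∑ j, ∑ i, k j i ^ 2 - n * H ^ 2
  have hn' : (0 : ℝ) < n := by exact_mod_cast (by omega : 0 < n)
  have hpn' : (0 : ℝ) ≤ p * (n - p) :=
    mul_nonneg p.cast_nonneg (sub_nonneg.2 (by exact_mod_cast (by omega : p ≤ n)))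
  have hX : 0 ≤ X := sub_nonneg.2 <| (card_mul_sq_sum_div_le_sum_sq (Fintype.card_fin n) _).trans
    (single_le_sum (f := fun j => ∑ i, k j i ^ 2) (fun j _ => by positivity) (mem_univ _))
  have hcoef : p * (n - p) / n * (n * (n - 2 * p) / √(n * p * (n - p)))
      = (n - 2 * p) * √(p * (n - p) / n : ℝ) := by
    rw [← div_sqrt_mul_eq_sqrt_div hpn', mul_assoc (n : ℝ)]
    field_simp
  have hcn : p * (n - p) / n * n = (p * (n - p) : ℝ) := div_mul_cancel₀ _ hn'.ne'
  rw [Real.sqrt_mul (div_nonneg hpn' hn'.le)] at key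
  refine Eq.trans_le ?_ key
  rw [Real.sq_sqrt hX]
  linear_combination H ^ 2 * hcn - H * √X * hcoef
end

section
/- Let n ≥ 3, p, m be integers with 1 ≤ p, 2p < n and m ≥ 1. Let k(j,i), for 1 ≤ j ≤ m and 1 ≤ i ≤ n, be real numbers such that Σᵢ k(1,i) > 0 and Σᵢ k(j,i) = 0 for every j ≥ 2. Set h = (1/n)·Σᵢ k(1,i) and φ = ( Σ_{j=1}^m Σ_{i=1}^n k(j,i)² − n·h² )^{1/2}. If Σ_{j=1}^m ( min over subsets a ⊆ {1,…,n} with |a| = p of K_a(k_j)·K_{⋆a}(k_j) ) = (p(n−p)/n)·( n·h² − (n(n−2p)/√(np(n−p)))·h·φ − φ² ), then k(j,i) = 0 for all j ≥ 2 and all i, and there exist a subset a ⊆ {1,…,n} with |a| = p and real numbers λ, μ with k(1,i) = λ for i ∈ a and k(1,i) = μ for i ∉ a. -/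
/-! Fix a row `x`, a `p`-subset `a`, and put `s = K_a(x)`, `t = K_{⋆a}(x)`, `h = (s + t) / n`,
`E = s - p h`. Then `s t = p (n - p) h² + (n - 2p) h E - E²`, while the two-block Cauchy–Schwarz
inequality `s² / p + t² / (n - p) ≤ ∑ xᵢ²` reads `E² ≤ c² := p (n - p) / n · ∑ (xᵢ - h)²`.
A concave function of `E` on `[-c, c]` is minimal at an endpoint, here at `E = -c` because
`(n - 2p) h ≥ 0`; this gives the bound `blockBound n p h c` for the row.

The rows `j ≥ 2` have `h = 0` and contribute `-c_j²`, so the sum of the row bounds exceeds the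
right-hand side of the hypothesis, `blockBound n p h √(∑ c_j²)`, by `(n - 2p) h (√(∑ c_j²) - c₁)`.
Hence equality forces `c_j = 0` for `j ≥ 2`, and, for a minimizing `a`, `E = -c` in the first row,
i.e. equality in Cauchy–Schwarz: the first row is constant on `a` and on `aᶜ`. -/

open Finset Fintype

theorem Finset.sum_sq_sub_mean {ι : Type*} (s : Finset ι) (x : ι → ℝ) :
    ∑ i ∈ s, (x i - (∑ j ∈ s, x j) / #s) ^ 2 = ∑ i ∈ s, x i ^ 2 - (∑ i ∈ s, x i) ^ 2 / #s := by
  rcases s.eq_empty_or_nonempty with rfl | hs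
  · simp
  have : (#s : ℝ) ≠ 0 := by positivity
  simp only [sub_sq, sum_add_distrib, sum_sub_distrib, ← sum_mul, ← mul_sum, sum_const,
    nsmul_eq_mul]
  field_simp
  ring

section BlockCauchySchwarz

variable {ι : Type*} [Fintype ι] [DecidableEq ι] (x : ι → ℝ) (a : Finset ι)

theorem sum_sq_sub_sq_sum_div_card_add_eq :
    ∑ i, x i ^ 2 - ((∑ i ∈ a, x i) ^ 2 / #a + (∑ i ∈ aᶜ, x i) ^ 2 / #aᶜ) =
      ∑ i ∈ a, (x i - (∑ j ∈ a, x j) / #a) ^ 2 +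
        ∑ i ∈ aᶜ, (x i - (∑ j ∈ aᶜ, x j) / #aᶜ) ^ 2 := by
  rw [sum_sq_sub_mean, sum_sq_sub_mean, ← sum_add_sum_compl a]
  ring

theorem sq_sum_div_card_add_le_sum_sq :
    (∑ i ∈ a, x i) ^ 2 / #a + (∑ i ∈ aᶜ, x i) ^ 2 / #aᶜ ≤ ∑ i, x i ^ 2 := by
  have := sum_sq_sub_sq_sum_div_card_add_eq x a
  have : 0 ≤ ∑ i ∈ a, (x i - (∑ j ∈ a, x j) / #a) ^ 2 := by positivity
  have : 0 ≤ ∑ i ∈ aᶜ, (x i - (∑ j ∈ aᶜ, x j) / #aᶜ) ^ 2 := by positivity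
  linarith

theorem eq_mean_of_sq_sum_div_card_add_eq_sum_sq
    (h : (∑ i ∈ a, x i) ^ 2 / #a + (∑ i ∈ aᶜ, x i) ^ 2 / #aᶜ = ∑ i, x i ^ 2) :
    (∀ i ∈ a, x i = (∑ j ∈ a, x j) / #a) ∧ ∀ i ∉ a, x i = (∑ j ∈ aᶜ, x j) / #aᶜ := by
  have hsum := sum_sq_sub_sq_sum_div_card_add_eq x a
  rw [h, sub_self, eq_comm, add_eq_zero_iff_of_nonneg (by positivity) (by positivity),
    Finset.sum_eq_zero_iff_of_nonneg fun _ _ => sq_nonneg _,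
    Finset.sum_eq_zero_iff_of_nonneg fun _ _ => sq_nonneg _] at hsum
  exact ⟨fun i hi => sub_eq_zero.1 (pow_eq_zero_iff two_ne_zero |>.1 (hsum.1 i hi)),
    fun i hi => sub_eq_zero.1 (pow_eq_zero_iff two_ne_zero |>.1 (hsum.2 i (mem_compl.2 hi)))⟩

end BlockCauchySchwarz

/-- The minimum of `p (n - p) h² + (n - 2p) h E - E²` over `E ∈ [-c, c]` when `(n - 2p) h ≥ 0`. -/
def blockBound (n p h c : ℝ) : ℝ := p * (n - p) * h ^ 2 - (n - 2 * p) * h * c - c ^ 2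

section BlockBound

variable {n p h c E : ℝ}

theorem sub_blockBound_eq (n p h c E : ℝ) :
    p * (n - p) * h ^ 2 + (n - 2 * p) * h * E - E ^ 2 - blockBound n p h c =
      (E + c) * ((n - 2 * p) * h + c - E) := by
  unfold blockBound
  ring

theorem blockBound_le (hc : 0 ≤ c) (hE : E ^ 2 ≤ c ^ 2) (hh : 0 ≤ (n - 2 * p) * h) :
    blockBound n p h c ≤ p * (n - p) * h ^ 2 + (n - 2 * p) * h * E - E ^ 2 := by
  obtain ⟨hlo, hhi⟩ := abs_le_of_sq_le_sq' hE hc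
  rw [← sub_nonneg, sub_blockBound_eq]
  exact mul_nonneg (by linarith) (by linarith)

theorem eq_neg_of_blockBound_eq (hc : 0 ≤ c) (hE : E ^ 2 ≤ c ^ 2) (hh : 0 < (n - 2 * p) * h)
    (heq : p * (n - p) * h ^ 2 + (n - 2 * p) * h * E - E ^ 2 = blockBound n p h c) :
    E = -c := by
  have hE_le := (abs_le_of_sq_le_sq' hE hc).2
  have hfac := sub_blockBound_eq n p h c E
  rw [heq, sub_self, eq_comm, mul_eq_zero] at hfac
  rcases hfac with h1 | h1 <;> linarith

theorem blockBound_sub_blockBound_sqrt_add {e : ℝ} (he : 0 ≤ e) :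
    blockBound n p h c - e - blockBound n p h √(c ^ 2 + e) =
      (n - 2 * p) * h * (√(c ^ 2 + e) - c) := by
  unfold blockBound
  linear_combination Real.sq_sqrt (by positivity : 0 ≤ c ^ 2 + e)

theorem blockBound_sqrt_add_le {e : ℝ} (he : 0 ≤ e) (hh : 0 ≤ (n - 2 * p) * h) :
    blockBound n p h √(c ^ 2 + e) ≤ blockBound n p h c - e := by
  rw [← sub_nonneg, blockBound_sub_blockBound_sqrt_add he]
  exact mul_nonneg hh (sub_nonneg.2 (Real.le_sqrt_of_sq_le (by linarith)))

theorem eq_zero_of_blockBound_sqrt_add_eq {e : ℝ} (he : 0 ≤ e) (hh : 0 < (n - 2 * p) * h)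
    (heq : blockBound n p h √(c ^ 2 + e) = blockBound n p h c - e) :
    e = 0 := by
  have hdefect := blockBound_sub_blockBound_sqrt_add (n := n) (p := p) (h := h) (c := c) he
  rw [heq, sub_self, eq_comm, mul_eq_zero, sub_eq_zero] at hdefect
  have hC := congrArg (· ^ 2) (hdefect.resolve_left hh.ne')
  simp only [Real.sq_sqrt (by positivity : 0 ≤ c ^ 2 + e)] at hC
  linarith

theorem blockBound_sqrt_mul_eq (hp : 0 < p) (hpn : p < n) (h X : ℝ) :
    blockBound n p h √(p * (n - p) / n * X) =
      p * (n - p) / n * (n * h ^ 2 - n * (n - 2 * p) / √(n * p * (n - p)) * h * √X - √X ^ 2) := by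
  have hn : 0 < n := hp.trans hpn
  have hρ : 0 ≤ p * (n - p) / n := by have := sub_pos.2 hpn; positivity
  have hsq : √(n * p * (n - p)) = n * √(p * (n - p) / n) := by
    rw [show n * p * (n - p) = n ^ 2 * (p * (n - p) / n) by field_simp,
      Real.sqrt_mul (by positivity), Real.sqrt_sq hn.le]
  rw [Real.sqrt_mul hρ, hsq, blockBound]
  set r := √(p * (n - p) / n)
  have hr2 : p * (n - p) / n = r ^ 2 := (Real.sq_sqrt hρ).symm
  have hr : 0 < r := Real.sqrt_pos.2 (by have := sub_pos.2 hpn; positivity)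
  rw [hr2, show p * (n - p) = n * r ^ 2 by rw [← hr2]; field_simp]
  field_simp

end BlockBound

section TwoBlocks

variable {n p s t Q : ℝ}

theorem mul_eq_of_ne_zero (hn : n ≠ 0) :
    s * t = p * (n - p) * ((s + t) / n) ^ 2 + (n - 2 * p) * ((s + t) / n) * (s - p * ((s + t) / n))
      - (s - p * ((s + t) / n)) ^ 2 := by
  field_simp
  ring

theorem sq_sub_mul_add_div_eq (hp : 0 < p) (hpn : p < n) :
    (s - p * ((s + t) / n)) ^ 2 =
      p * (n - p) / n * (s ^ 2 / p + t ^ 2 / (n - p) - n * ((s + t) / n) ^ 2) := by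
  have : n - p ≠ 0 := (sub_pos.2 hpn).ne'
  have : n ≠ 0 := (hp.trans hpn).ne'
  field_simp
  ring

theorem sq_sub_mul_add_div_le (hp : 0 < p) (hpn : p < n)
    (hQ : s ^ 2 / p + t ^ 2 / (n - p) ≤ Q) :
    (s - p * ((s + t) / n)) ^ 2 ≤ p * (n - p) / n * (Q - n * ((s + t) / n) ^ 2) := by
  have hρ : 0 ≤ p * (n - p) / n := by
    have := sub_pos.2 hpn; have := hp.trans hpn; positivity
  rw [sq_sub_mul_add_div_eq hp hpn]
  gcongr

theorem blockBound_le_mul (hp : 0 < p) (hpn : p < n) (hQ : s ^ 2 / p + t ^ 2 / (n - p) ≤ Q)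
    (hst : 0 ≤ (n - 2 * p) * (s + t)) :
    blockBound n p ((s + t) / n) √(p * (n - p) / n * (Q - n * ((s + t) / n) ^ 2)) ≤ s * t := by
  have hn : 0 < n := hp.trans hpn
  have hE := sq_sub_mul_add_div_le hp hpn hQ
  refine (blockBound_le (Real.sqrt_nonneg _) ?_ ?_).trans_eq (mul_eq_of_ne_zero hn.ne').symm
  · rwa [Real.sq_sqrt ((sq_nonneg _).trans hE)]
  · rw [mul_div_assoc']; exact div_nonneg hst hn.le

theorem sq_div_add_sq_div_eq_of_mul_eq_blockBound (hp : 0 < p) (hpn : p < n)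
    (hQ : s ^ 2 / p + t ^ 2 / (n - p) ≤ Q) (hst : 0 < (n - 2 * p) * (s + t))
    (heq : s * t =
      blockBound n p ((s + t) / n) √(p * (n - p) / n * (Q - n * ((s + t) / n) ^ 2))) :
    s ^ 2 / p + t ^ 2 / (n - p) = Q := by
  have hn : 0 < n := hp.trans hpn
  have hρ : 0 < p * (n - p) / n := by have := sub_pos.2 hpn; positivity
  have hE := sq_sub_mul_add_div_le hp hpn hQ
  have hc2 := Real.sq_sqrt ((sq_nonneg _).trans hE)
  have hE_eq := eq_neg_of_blockBound_eq (Real.sqrt_nonneg _) (hc2.symm ▸ hE)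
    (by rw [mul_div_assoc']; exact div_pos hst hn) ((mul_eq_of_ne_zero hn.ne').symm.trans heq)
  have := sq_sub_mul_add_div_eq (s := s) (t := t) hp hpn
  rw [hE_eq, neg_sq, hc2] at this
  linarith [(mul_left_cancel₀ hρ.ne' this).symm]

end TwoBlocks

section Rows

variable {ι : Type*} [Fintype ι]

theorem card_mul_sq_sum_div_card_le_sum_sq (x : ι → ℝ) :
    card ι * ((∑ i, x i) / card ι) ^ 2 ≤ ∑ i, x i ^ 2 := by
  rcases eq_or_ne (card ι : ℝ) 0 with h | h
  · rw [h, zero_mul]; positivity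
  rw [div_pow, mul_div_assoc', show (card ι : ℝ) * (∑ i, x i) ^ 2 / card ι ^ 2
    = (∑ i, x i) ^ 2 / card ι by field_simp]
  exact div_le_of_le_mul₀ (Nat.cast_nonneg _) (by positivity)
    (by simpa [mul_comm] using sq_sum_le_card_mul_sum_sq (s := univ) (f := x))

noncomputable def rowBound (p : ℕ) (x : ι → ℝ) : ℝ :=
  blockBound (card ι) p ((∑ i, x i) / card ι)
    √(p * (card ι - p) / card ι * (∑ i, x i ^ 2 - card ι * ((∑ i, x i) / card ι) ^ 2))

theorem rowBound_of_sum_eq_zero {p : ℕ} (hpn : p ≤ card ι) {x : ι → ℝ} (hx : ∑ i, x i = 0) :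
    rowBound p x = -(p * (card ι - p) / card ι * ∑ i, x i ^ 2) := by
  have : 0 ≤ (card ι : ℝ) - p := sub_nonneg.2 (by exact_mod_cast hpn)
  simp only [rowBound, blockBound, hx, zero_div, zero_pow two_ne_zero, mul_zero, sub_zero,
    zero_mul, Real.sq_sqrt (by positivity : (0 : ℝ) ≤ p * (card ι - p) / card ι * ∑ i, x i ^ 2),
    zero_sub]

variable [DecidableEq ι] {x : ι → ℝ} {a : Finset ι}

theorem rowBound_le_mul_sum_compl (ha : 0 < #a) (han : #a < card ι)
    (hx : 0 ≤ ((card ι : ℝ) - 2 * #a) * ∑ i, x i) :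
    rowBound #a x ≤ (∑ i ∈ a, x i) * ∑ i ∈ aᶜ, x i := by
  have hc : (#aᶜ : ℝ) = card ι - #a := by rw [card_compl, Nat.cast_sub han.le]
  have := blockBound_le_mul (by exact_mod_cast ha) (by exact_mod_cast han)
    (hc ▸ sq_sum_div_card_add_le_sum_sq x a) ((sum_add_sum_compl a x).symm ▸ hx)
  rwa [sum_add_sum_compl] at this

theorem exists_eqOn_of_mul_sum_compl_eq_rowBound (ha : 0 < #a) (han : #a < card ι)
    (hx : 0 < ((card ι : ℝ) - 2 * #a) * ∑ i, x i)
    (heq : (∑ i ∈ a, x i) * ∑ i ∈ aᶜ, x i = rowBound #a x) :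
    ∃ lam mu : ℝ, (∀ i ∈ a, x i = lam) ∧ ∀ i ∉ a, x i = mu := by
  have hc : (#aᶜ : ℝ) = card ι - #a := by rw [card_compl, Nat.cast_sub han.le]
  have hCS := sq_div_add_sq_div_eq_of_mul_eq_blockBound (by exact_mod_cast ha)
    (by exact_mod_cast han) (hc ▸ sq_sum_div_card_add_le_sum_sq x a)
    ((sum_add_sum_compl a x).symm ▸ hx) (by rw [sum_add_sum_compl]; exact heq)
  exact ⟨_, _, eq_mean_of_sq_sum_div_card_add_eq_sum_sq x a (hc ▸ hCS)⟩

end Rows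
section Families

variable {ι J : Type*} [Fintype ι] [Fintype J] [DecidableEq J] {k : J → ι → ℝ} {z : J} {p : ℕ}

theorem sum_rowBound_eq (hk : ∀ j ≠ z, ∑ i, k j i = 0) (hpn : p ≤ card ι) :
    ∑ j, rowBound p (k j) =
      rowBound p (k z) - p * (card ι - p) / card ι * ∑ j ∈ {z}ᶜ, ∑ i, k j i ^ 2 := by
  rw [Fintype.sum_eq_add_sum_compl z, mul_sum, sub_eq_add_neg, ← sum_neg_distrib]
  exact congrArg _
    (sum_congr rfl fun j hj => rowBound_of_sum_eq_zero hpn (hk j (by simpa using hj)))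

theorem sqrt_mul_sum_sum_sq_sub_eq (hpn : p ≤ card ι) :
    √(p * (card ι - p) / card ι * (∑ j, ∑ i, k j i ^ 2 - card ι * ((∑ i, k z i) / card ι) ^ 2)) =
      √(√(p * (card ι - p) / card ι * (∑ i, k z i ^ 2 - card ι * ((∑ i, k z i) / card ι) ^ 2)) ^ 2
        + p * (card ι - p) / card ι * ∑ j ∈ {z}ᶜ, ∑ i, k j i ^ 2) := by
  have : (p : ℝ) ≤ card ι := by exact_mod_cast hpn
  have : 0 ≤ (p : ℝ) * (card ι - p) / card ι := by
    have : 0 ≤ (card ι : ℝ) - p := by linarith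
    positivity
  rw [Real.sq_sqrt (mul_nonneg this (sub_nonneg.2 (card_mul_sq_sum_div_card_le_sum_sq _))),
    Fintype.sum_eq_add_sum_compl z]
  congr 1
  ring

theorem blockBound_le_sum_rowBound (hk : ∀ j ≠ z, ∑ i, k j i = 0) (hpn : p ≤ card ι)
    (hz : 0 ≤ ((card ι : ℝ) - 2 * p) * ∑ i, k z i) :
    blockBound (card ι) p ((∑ i, k z i) / card ι)
        √(p * (card ι - p) / card ι * (∑ j, ∑ i, k j i ^ 2 - card ι * ((∑ i, k z i) / card ι) ^ 2))
      ≤ ∑ j, rowBound p (k j) := by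
  have : (p : ℝ) ≤ card ι := by exact_mod_cast hpn
  have : 0 ≤ (card ι : ℝ) - p := by linarith
  rw [sum_rowBound_eq hk hpn, sqrt_mul_sum_sum_sq_sub_eq hpn]
  exact blockBound_sqrt_add_le (by positivity) (by rw [mul_div_assoc']; positivity)

theorem eq_zero_of_blockBound_eq_sum_rowBound (hk : ∀ j ≠ z, ∑ i, k j i = 0) (hp : 0 < p)
    (hpn : p < card ι) (hz : 0 < ((card ι : ℝ) - 2 * p) * ∑ i, k z i)
    (heq : blockBound (card ι) p ((∑ i, k z i) / card ι)
        √(p * (card ι - p) / card ι * (∑ j, ∑ i, k j i ^ 2 - card ι * ((∑ i, k z i) / card ι) ^ 2))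
      = ∑ j, rowBound p (k j)) :
    ∀ j ≠ z, k j = 0 := by
  have : (p : ℝ) < card ι := by exact_mod_cast hpn
  have : (0 : ℝ) < p := by exact_mod_cast hp
  have hn : (0 : ℝ) < card ι := by linarith
  have hρ : (0 : ℝ) < p * (card ι - p) / card ι := by
    have : 0 < (card ι : ℝ) - p := by linarith
    positivity
  rw [sum_rowBound_eq hk hpn.le, sqrt_mul_sum_sum_sq_sub_eq hpn.le] at heq
  have := eq_zero_of_blockBound_sqrt_add_eq (by positivity)
    (by rw [mul_div_assoc']; exact div_pos hz hn) heq
  rw [mul_eq_zero, or_iff_right hρ.ne',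
    Finset.sum_eq_zero_iff_of_nonneg fun j _ => by positivity] at this
  intro j hj
  ext i
  simpa using (Finset.sum_eq_zero_iff_of_nonneg fun i _ => sq_nonneg (k j i)).1
    (this j (by simpa using hj)) i (mem_univ i)

end Families

theorem bochner_equality_case_mean_curvature (n p m : ℕ) (hp : 1 ≤ p)
    (hpn : 2 * p < n) (hm : 1 ≤ m)
    (k : Fin m → Fin n → ℝ)
    (h0 : 0 < ∑ i, k ⟨0, hm⟩ i)
    (hj : ∀ j : Fin m, (j : ℕ) ≠ 0 → ∑ i, k j i = 0)
    (heq : ∑ j, (Finset.univ.powersetCard p).inf'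
        (Finset.powersetCard_nonempty.mpr
          (by simp only [Finset.card_univ, Fintype.card_fin]; omega))
        (fun a => (∑ i ∈ a, k j i) * (∑ i ∈ aᶜ, k j i))
      = ((p : ℝ) * ((n : ℝ) - (p : ℝ)) / (n : ℝ)) *
          ((n : ℝ) * ((∑ i, k ⟨0, hm⟩ i) / (n : ℝ)) ^ 2
            - ((n : ℝ) * ((n : ℝ) - 2 * (p : ℝ))
                / Real.sqrt ((n : ℝ) * (p : ℝ) * ((n : ℝ) - (p : ℝ))))
              * ((∑ i, k ⟨0, hm⟩ i) / (n : ℝ))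
              * Real.sqrt ((∑ j, ∑ i, (k j i) ^ 2)
                  - (n : ℝ) * ((∑ i, k ⟨0, hm⟩ i) / (n : ℝ)) ^ 2)
            - (Real.sqrt ((∑ j, ∑ i, (k j i) ^ 2)
                  - (n : ℝ) * ((∑ i, k ⟨0, hm⟩ i) / (n : ℝ)) ^ 2)) ^ 2)) :
    (∀ j : Fin m, (j : ℕ) ≠ 0 → ∀ i, k j i = 0) ∧
    ∃ a : Finset (Fin n), a.card = p ∧ ∃ lam mu : ℝ,
      (∀ i ∈ a, k ⟨0, hm⟩ i = lam) ∧ (∀ i ∉ a, k ⟨0, hm⟩ i = mu) := by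
  set z : Fin m := ⟨0, hm⟩
  have hk : ∀ j ≠ z, ∑ i, k j i = 0 := fun j hjz => hj j fun h => hjz (Fin.ext h)
  have hpn' : p < card (Fin n) := by rw [Fintype.card_fin]; omega
  have hz : 0 < ((card (Fin n) : ℝ) - 2 * p) * ∑ i, k z i :=
    mul_pos (sub_pos.2 (by rw [Fintype.card_fin]; exact_mod_cast hpn)) h0
  have hsign : ∀ j, 0 ≤ ((card (Fin n) : ℝ) - 2 * p) * ∑ i, k j i := fun j => by
    rcases eq_or_ne j z with rfl | hjz
    · exact hz.le
    · rw [hk j hjz, mul_zero]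
  have hne : (univ.powersetCard p : Finset (Finset (Fin n))).Nonempty :=
    powersetCard_nonempty.2 (by rw [card_univ]; exact hpn'.le)
  have hrow : ∀ j, rowBound p (k j) ≤ (univ.powersetCard p).inf' hne
      (fun a => (∑ i ∈ a, k j i) * (∑ i ∈ aᶜ, k j i)) := fun j =>
    le_inf' _ _ fun a ha => by
      obtain rfl := mem_powersetCard_univ.1 ha
      exact rowBound_le_mul_sum_compl hp hpn' (hsign j)
  rw [← blockBound_sqrt_mul_eq (by exact_mod_cast hp) (by exact_mod_cast (by omega : p < n))] at heq
  have hle := blockBound_le_sum_rowBound hk hpn'.le hz.le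
  rw [Fintype.card_fin] at hle
  have hsum := le_antisymm (sum_le_sum fun j _ => hrow j) (heq ▸ hle)
  have hrest := eq_zero_of_blockBound_eq_sum_rowBound hk hp hpn' hz
    (by rw [Fintype.card_fin]; exact heq.symm.trans hsum.symm)
  have hfirst := (sum_eq_sum_iff_of_le fun j _ => hrow j).1 hsum z (mem_univ z)
  refine ⟨fun j hj0 => congrFun (hrest j fun h => hj0 (congrArg Fin.val h)), ?_⟩
  obtain ⟨a, ha, hmin⟩ := exists_mem_eq_inf' hne fun a => (∑ i ∈ a, k z i) * ∑ i ∈ aᶜ, k z i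
  obtain rfl := mem_powersetCard_univ.1 ha
  exact ⟨a, rfl, exists_eqOn_of_mul_sum_compl_eq_rowBound hp hpn' hz (hmin.symm.trans hfirst.symm)⟩
end

section
/- Let n ≥ 3 and p ≤ q be integers with 1 ≤ p and 2q ≤ n, and let t ≥ 0 and c be real numbers with t² + c ≥ 0. Then a(n,p,t,c) ≤ a(n,q,t,c). -/
/-!
With `s = p(n-p)`, `m = |n-2p|` (so that `m² = n² - 4s`) and `y = m t / √s`, the bound rewrites as
`a(n,p,t,c) = n t² + n r²`, where `r` is the largest root of `x² + y x - (t² + c)`; this is the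
paper's `r(n,p,H,c)` at `H = t`, rescaled by `√n`. Because `t² + c ≥ 0` that root is nonnegative
and decreasing in `y`, while `y` decreases as `p` moves up towards `n/2`.
-/

open Real

noncomputable def largestRoot (b d : ℝ) : ℝ := (-b + √(b ^ 2 + 4 * d)) / 2

section largestRoot

variable {d : ℝ}

lemma le_sqrt_sq_add (hd : 0 ≤ d) (b : ℝ) : b ≤ √(b ^ 2 + d) :=
  (le_abs_self b).trans (abs_le_sqrt (by linarith))

lemma largestRoot_nonneg (hd : 0 ≤ d) (b : ℝ) : 0 ≤ largestRoot b d := by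
  have := le_sqrt_sq_add (by positivity : 0 ≤ 4 * d) b
  unfold largestRoot
  linarith

lemma largestRoot_antitone (hd : 0 ≤ d) : Antitone (largestRoot · d) := by
  intro b₁ b₂ hb
  have hb₁ := le_sqrt_sq_add (by positivity : 0 ≤ 4 * d) b₁
  have hsq := sq_sqrt (by positivity : 0 ≤ b₁ ^ 2 + 4 * d)
  -- `b ↦ √(b² + 4d)` is 1-Lipschitz
  have hlip : √(b₂ ^ 2 + 4 * d) ≤ √(b₁ ^ 2 + 4 * d) + (b₂ - b₁) := by
    rw [sqrt_le_left (by linarith [sqrt_nonneg (b₁ ^ 2 + 4 * d)])]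
    nlinarith [mul_le_mul_of_nonneg_left hb₁ (sub_nonneg.mpr hb)]
  unfold largestRoot
  linarith

lemma largestRoot_sq_antitone (hd : 0 ≤ d) : Antitone (fun b ↦ largestRoot b d ^ 2) :=
  fun _ _ hb ↦ pow_le_pow_left₀ (largestRoot_nonneg hd _) (largestRoot_antitone hd hb) 2

end largestRoot

lemma pinchA_eq_largestRoot {n p : ℕ} (hp : 0 < p) (hpn : p < n) {t c : ℝ}
    (htc : 0 ≤ t ^ 2 + c) :
    pinchA n p t c = n * t ^ 2 +
      n * largestRoot (|(n : ℝ) - 2 * p| * t / √(p * (n - p))) (t ^ 2 + c) ^ 2 := by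
  have hs : (0 : ℝ) < p * (n - p) :=
    mul_pos (by exact_mod_cast hp) (sub_pos.mpr (by exact_mod_cast hpn))
  set s : ℝ := p * (n - p) with hs_def
  set m : ℝ := |(n : ℝ) - 2 * p| with hm_def
  have hm : m ^ 2 = n ^ 2 - 4 * s := by rw [sq_abs, hs_def]; ring
  have hX : 0 ≤ n ^ 2 * t ^ 2 + 4 * s * c := by nlinarith [sq_nonneg (m * t)]
  set X := √(n ^ 2 * t ^ 2 + 4 * s * c) with hX_def
  have hXsq : X ^ 2 = n ^ 2 * t ^ 2 + 4 * s * c := sq_sqrt hX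
  have hroot : largestRoot (m * t / √s) (t ^ 2 + c) = (X - m * t) / (2 * √s) := by
    have hdisc : (m * t / √s) ^ 2 + 4 * (t ^ 2 + c) = (n ^ 2 * t ^ 2 + 4 * s * c) / s := by
      rw [div_pow, sq_sqrt hs.le]
      field_simp
      linear_combination t ^ 2 * hm
    rw [largestRoot, hdisc, sqrt_div hX, ← hX_def]
    field_simp
    ring
  have hsqrt : √s ^ 2 = s := sq_sqrt hs.le
  rw [hroot, pinchA, div_pow, mul_pow, hsqrt, ← hm_def,
    show 2 * (p : ℝ) * (n - p) = 2 * s by ring, show 4 * (p : ℝ) * (n - p) * c = 4 * s * c by ring,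
    ← hX_def]
  field_simp
  linear_combination (-n) * (hXsq + t ^ 2 * hm)

theorem pinchA_mono_general (n p q : ℕ) (hp : 1 ≤ p) (hpq : p ≤ q) (hq : 2 * q ≤ n)
    (t c : ℝ) (ht : 0 ≤ t) (htc : 0 ≤ t ^ 2 + c) :
    pinchA n p t c ≤ pinchA n q t c := by
  have hp' : (1 : ℝ) ≤ p := by exact_mod_cast hp
  have hpq' : (p : ℝ) ≤ q := by exact_mod_cast hpq
  have hq' : 2 * (q : ℝ) ≤ n := by exact_mod_cast hq
  rw [pinchA_eq_largestRoot (by omega) (by omega) htc,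
    pinchA_eq_largestRoot (by omega) (by omega) htc]
  have hcoef :
      |(n : ℝ) - 2 * q| * t / √(q * (n - q)) ≤ |(n : ℝ) - 2 * p| * t / √(p * (n - p)) := by
    rw [abs_of_nonneg (by linarith), abs_of_nonneg (by linarith)]
    apply div_le_div₀ (by nlinarith) (by nlinarith) (sqrt_pos.mpr (by nlinarith))
    exact sqrt_le_sqrt (by nlinarith)
  gcongr (n : ℝ) * t ^ 2 + n * ?_
  exact largestRoot_sq_antitone htc hcoef

theorem pinchA_mono (n p q : ℕ) (hn : 3 ≤ n) (hp : 1 ≤ p) (hpq : p ≤ q) (hq : 2 * q ≤ n)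
    (t c : ℝ) (ht : 0 ≤ t) (htc : 0 ≤ t ^ 2 + c) :
    pinchA n p t c ≤ pinchA n q t c :=
  pinchA_mono_general n p q hp hpq hq t c ht htc
end
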